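/- Let M : X → X be bounded, linear and injective, E a finite-dimensional subspace of X, V a closed complement of M(E) in X (i.e. X = M(E) ⊕ V via a continuous projection), and U = M⁻¹(V ∩ M(X)). Then E ∩ U = {0}, U is closed, and X = E ⊕ U. -/
import Mathlib


/-- With M bounded injective, E finite-dimensional, V a closed complement of M(E),
and U = M⁻¹(V ∩ M(X)) = M⁻¹(V): E ∩ U = {0}, U is closed, and X = E ⊕ U. -/
theorem stmt11 (X : Type) [NormedAddCommGroup X] [NormedSpace ℝ X] [CompleteSpace X]
    (M : X →L[ℝ] X) (hinj : Function.Injective M)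
    (E : Submodule ℝ X) [FiniteDimensional ℝ E]
    (V : Submodule ℝ X) (hVclosed : IsClosed (V : Set X))
    (hcompl : IsCompl (E.map (M : X →ₗ[ℝ] X)) V)
    (U : Submodule ℝ X) (hU : U = V.comap (M : X →ₗ[ℝ] X)) :
    E ⊓ U = ⊥ ∧ IsClosed (U : Set X) ∧ IsCompl E U := by
  subst hU
  have hdisj : E ⊓ V.comap (M : X →ₗ[ℝ] X) = ⊥ := by
    rw [eq_bot_iff]
    rintro x ⟨hxE, hxU⟩
    have hmem : M x ∈ E.map (M : X →ₗ[ℝ] X) ⊓ V := ⟨⟨x, hxE, rfl⟩, hxU⟩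
    rw [hcompl.inf_eq_bot] at hmem
    have hx0 : M x = 0 := hmem
    have : x = 0 := hinj (by simpa using hx0)
    simp [this]
  have hclosed : IsClosed ((V.comap (M : X →ₗ[ℝ] X) : Submodule ℝ X) : Set X) :=
    hVclosed.preimage M.continuous
  refine ⟨hdisj, hclosed, ?_, ?_⟩
  · exact disjoint_iff.mpr hdisj
  · rw [codisjoint_iff, eq_top_iff]
    intro x _
    have hx : M x ∈ E.map (M : X →ₗ[ℝ] X) ⊔ V := by
      rw [hcompl.sup_eq_top]; trivial
    obtain ⟨m, hm, v, hv, hmv⟩ := Submodule.mem_sup.mp hx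
    obtain ⟨e, he, rfl⟩ := hm
    refine Submodule.mem_sup.mpr ⟨e, he, x - e, ?_, by abel⟩
    have hsub : (M : X →ₗ[ℝ] X) (x - e) = v := by
      rw [map_sub, sub_eq_iff_eq_add']
      exact hmv.symm
    exact show (M : X →ₗ[ℝ] X) (x - e) ∈ V from hsub ▸ hv
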